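/- arXiv:2211.01648 — 2 statements merged into one kernel-verified Lean document; each statement's English description precedes it below -/
import Mathlib

section
/- Let s₀, s₁, q₀, q₁ be real numbers (with s₁ + q₁P and the denominator e^P(s₁ - q₁P) - (s₁ + q₁P) nonzero), and define c₁(δ, P) = ((s₁ + q₁P)δ + (s₀ + q₀P))/(2(q₁δ + q₀)). If δ* = -(e^P(s₀ - q₀P) - (s₀ + q₀P))/(e^P(s₁ - q₁P) - (s₁ + q₁P)), then c₁(δ*, P) = P·e^P/(e^P - 1) = B(-P), where B is the Bernoulli function. -/
noncomputable def B (x : ℝ) : ℝ := if x = 0 then 1 else x / (Real.exp x - 1)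

theorem sg_stabilization_identity (s₀ s₁ q₀ q₁ P : ℝ) (hP : P ≠ 0)
    (h₁ : s₁ + q₁ * P ≠ 0)
    (h₂ : Real.exp P * (s₁ - q₁ * P) - (s₁ + q₁ * P) ≠ 0)
    (δstar : ℝ)
    (hδ : δstar = -(Real.exp P * (s₀ - q₀ * P) - (s₀ + q₀ * P)) /
        (Real.exp P * (s₁ - q₁ * P) - (s₁ + q₁ * P)))
    (h₃ : q₁ * δstar + q₀ ≠ 0) :
    ((s₁ + q₁ * P) * δstar + (s₀ + q₀ * P)) / (2 * (q₁ * δstar + q₀))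
      = P * Real.exp P / (Real.exp P - 1) ∧
    ((s₁ + q₁ * P) * δstar + (s₀ + q₀ * P)) / (2 * (q₁ * δstar + q₀))
      = B (-P) := by
  have hE1 : Real.exp P - 1 ≠ 0 := by
    intro h
    have : Real.exp P = Real.exp 0 := by rw [Real.exp_zero]; linarith
    exact hP (Real.exp_injective this)
  have key : ((s₁ + q₁ * P) * δstar + (s₀ + q₀ * P)) / (2 * (q₁ * δstar + q₀))
      = P * Real.exp P / (Real.exp P - 1) := by
    subst hδ
    rw [div_eq_div_iff (mul_ne_zero two_ne_zero h₃) hE1]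
    field_simp
    ring
  refine ⟨key, ?_⟩
  rw [key, B, if_neg (neg_ne_zero.mpr hP), Real.exp_neg]
  rw [div_eq_div_iff hE1 (by
    intro h
    have h1 : (Real.exp P)⁻¹ = 1 := by linarith
    have := Real.exp_pos P
    field_simp at h1
    exact hE1 (by linarith))]
  field_simp
  ring
end

section
/- Define δ₁(P) = -(e^P(P² - 6P + 12) - (P² + 6P + 12))/(e^P(2-P) - (P+2)). Then δ₁(P) > 0 for all P, and δ₁(P)/|P| → 1 as |P| → ∞. -/
open Filter Topology

/-- δ₁, defined by continuous extension at the removable singularity P = 0. -/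
noncomputable def δ₁ (P : ℝ) : ℝ :=
    if P = 0 then 6 else
      -(Real.exp P * (P ^ 2 - 6 * P + 12) - (P ^ 2 + 6 * P + 12)) /
        (Real.exp P * (2 - P) - (P + 2))

/-!
Write `δ₁ = -N / D`. Under `P ↦ -P` both `N` and `D` pick up the factor `-e^{-P}`, so `δ₁` is even
and it suffices to look at `P > 0`. There `D < 0`, since `D 0 = 0` and `D' = (1 - P) e^P - 1 < 0`,
while `N > 0` by the degree-five Taylor lower bound for `e^P`. Dividing `N` by `P² e^P` and `D` by
`-P e^P` exhibits `δ₁ P / P` as a continuous function of `(1 / P, e^{-P})` taking the value `1`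
at `(0, 0)`.
-/

open Real

namespace Delta1

noncomputable def num (P : ℝ) : ℝ := exp P * (P ^ 2 - 6 * P + 12) - (P ^ 2 + 6 * P + 12)

noncomputable def den (P : ℝ) : ℝ := exp P * (2 - P) - (P + 2)

lemma δ₁_of_ne_zero {P : ℝ} (hP : P ≠ 0) : δ₁ P = -num P / den P := if_neg hP

lemma num_neg (P : ℝ) : num (-P) = -exp (-P) * num P := by
  simp only [num, exp_neg]
  field_simp
  ring

lemma den_neg (P : ℝ) : den (-P) = -exp (-P) * den P := by
  simp only [den, exp_neg]
  field_simp
  ring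

lemma δ₁_neg (P : ℝ) : δ₁ (-P) = δ₁ P := by
  rcases eq_or_ne P 0 with rfl | hP
  · rw [neg_zero]
  rw [δ₁_of_ne_zero hP, δ₁_of_ne_zero (neg_ne_zero.mpr hP), num_neg, den_neg, neg_div,
    mul_div_mul_left _ _ (neg_ne_zero.mpr (exp_pos _).ne'), neg_div]

lemma one_sub_mul_exp_lt_one {x : ℝ} (hx : x ≠ 0) : (1 - x) * exp x < 1 := by
  calc (1 - x) * exp x < exp (-x) * exp x := by gcongr; exact one_sub_lt_exp_neg hx
    _ = 1 := by rw [← exp_add, neg_add_cancel, exp_zero]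

lemma hasDerivAt_den (x : ℝ) : HasDerivAt den ((1 - x) * exp x - 1) x := by
  unfold den
  exact (((hasDerivAt_exp x).mul ((hasDerivAt_id' x).const_sub 2)).sub
    ((hasDerivAt_id' x).add_const 2)).congr_deriv (by ring)

lemma den_lt_zero {P : ℝ} (hP : 0 < P) : den P < 0 := by
  have hanti : StrictAntiOn den (Set.Ici 0) := by
    refine strictAntiOn_of_deriv_neg (convex_Ici 0)
      (fun x _ ↦ (hasDerivAt_den x).continuousAt.continuousWithinAt) fun x hx ↦ ?_
    rw [interior_Ici, Set.mem_Ioi] at hx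
    rw [(hasDerivAt_den x).deriv]
    linarith [one_sub_mul_exp_lt_one hx.ne']
  simpa [den] using hanti Set.self_mem_Ici hP.le hP

lemma num_pos {P : ℝ} (hP : 0 < P) : 0 < num P := by
  have htaylor : 1 + P + P ^ 2 / 2 + P ^ 3 / 6 + P ^ 4 / 24 + P ^ 5 / 120 ≤ exp P := by
    simpa [Finset.sum_range_succ, Nat.factorial] using sum_le_exp_of_nonneg hP.le 6
  have hq : 0 < P ^ 2 - 6 * P + 12 := by nlinarith [sq_nonneg (P - 3)]
  have hquad : 0 < P ^ 2 - P + 2 := by nlinarith [sq_nonneg (2 * P - 1)]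
  unfold num
  -- with `T` the degree-five Taylor polynomial of `exp`,
  -- `T P * (P² - 6P + 12) - (P² + 6P + 12) = P⁵ (P² - P + 2) / 120`
  nlinarith [mul_le_mul_of_nonneg_right htaylor hq.le, mul_pos (pow_pos hP 5) hquad]

lemma δ₁_pos_of_pos {P : ℝ} (hP : 0 < P) : 0 < δ₁ P := by
  rw [δ₁_of_ne_zero hP.ne']
  exact div_pos_of_neg_of_neg (neg_neg_of_pos (num_pos hP)) (den_lt_zero hP)

lemma δ₁_pos (P : ℝ) : 0 < δ₁ P := by
  rcases lt_trichotomy P 0 with hP | rfl | hP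
  · simpa [δ₁_neg] using δ₁_pos_of_pos (neg_pos.mpr hP)
  · norm_num [δ₁]
  · exact δ₁_pos_of_pos hP

lemma δ₁_div_self_eq {P : ℝ} (hP : 0 < P) :
    δ₁ P / P = ((1 - 6 * P⁻¹ + 12 * P⁻¹ ^ 2) - exp (-P) * (1 + 6 * P⁻¹ + 12 * P⁻¹ ^ 2)) /
      ((1 - 2 * P⁻¹) + exp (-P) * (1 + 2 * P⁻¹)) := by
  rw [δ₁_of_ne_zero hP.ne', exp_neg]
  unfold num den
  field_simp
  rw [← div_neg]
  congr 1
  ring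

lemma tendsto_δ₁_div_self_atTop : Tendsto (fun P ↦ δ₁ P / P) atTop (𝓝 1) := by
  have hlim : Tendsto (fun P : ℝ ↦ (P⁻¹, exp (-P))) atTop (𝓝 (0, 0)) :=
    tendsto_inv_atTop_zero.prodMk_nhds tendsto_exp_neg_atTop_nhds_zero
  have hcont : ContinuousAt (fun q : ℝ × ℝ ↦ ((1 - 6 * q.1 + 12 * q.1 ^ 2) -
      q.2 * (1 + 6 * q.1 + 12 * q.1 ^ 2)) / ((1 - 2 * q.1) + q.2 * (1 + 2 * q.1))) (0, 0) := by
    fun_prop (disch := norm_num)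
  have := hcont.tendsto.comp hlim
  norm_num at this
  exact this.congr' <| (eventually_gt_atTop 0).mono fun P hP ↦ (δ₁_div_self_eq hP).symm

end Delta1

theorem delta1_pos_and_asymptotics :
    (∀ P : ℝ, 0 < δ₁ P) ∧
    Tendsto (fun P => δ₁ P / |P|) atTop (𝓝 1) ∧
    Tendsto (fun P => δ₁ P / |P|) atBot (𝓝 1) := by
  have hTop : Tendsto (fun P ↦ δ₁ P / |P|) atTop (𝓝 1) :=
    Delta1.tendsto_δ₁_div_self_atTop.congr' <| (eventually_gt_atTop 0).mono fun P hP ↦ by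
      simp only [abs_of_pos hP]
  refine ⟨Delta1.δ₁_pos, hTop, ?_⟩
  exact (hTop.comp tendsto_neg_atBot_atTop).congr fun P ↦ by simp [Delta1.δ₁_neg]
end
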